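/- arXiv:2405.06767 — 3 statements merged into one kernel-verified Lean document; each statement's English description precedes it below -/
import Mathlib

section
/- Let Q be an acyclic (tree-shaped) directed query graph with vertices ordered x₁,…,x_n so that each x_j (j ≥ 2) is adjacent (ignoring edge direction) to exactly one earlier vertex, and let σ be a stable coloring of a finite directed graph G with lifted graph statistics ψ and τ (where τ_min = τ_avg = τ_max =: τ by stability). Then for every coloring π ∈ hom(Q,F), the number of homomorphisms π' : Q → G with σ ∘ π' = π equals W(π) := ψ(π(x₁)) · ∏_{(x_i,x_j)∈E_Q} τ(π(x_i), π(x_j)), and consequently |hom(Q,G)| = Σ_{π ∈ hom(Q,F)} W(π). -/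
/-!
Delete the last vertex, which is a leaf. A lift of a colouring `g` restricts to a lift for the
smaller tree, and the lifts extending a fixed one correspond to the neighbours, in the direction
of the deleted edge, of the image of its parent that have colour `g (last)`. By stability their
number depends only on the colours of the two endpoints, so induction on the number of vertices
gives `ψ (g 0) * ∏ τ`. Summing over the fibres of `f ↦ σ ∘ f` gives the total count.
-/

open Finset

theorem Fin.card_filter_init_last {α : Type*} [Fintype α] [DecidableEq α] {n : ℕ}
    (s : Finset (Fin n → α)) (Q : (Fin n → α) → α → Prop) [∀ f, DecidablePred (Q f)] :
    #{f : Fin (n + 1) → α | Fin.init f ∈ s ∧ Q (Fin.init f) (f (Fin.last n))} =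
      ∑ f ∈ s, #{a | Q f a} := by
  rw [card_filter, ← (Fin.snocEquiv fun _ => α).sum_comp, Fintype.sum_prod_type, sum_comm,
    ← sum_subset (subset_univ s) fun f _ hf => by simp [Fin.snocEquiv, hf]]
  refine sum_congr rfl fun f hf => ?_
  simp only [Fin.snocEquiv, Equiv.coe_fn_mk, Fin.init_snoc, Fin.snoc_last, hf, true_and,
    card_filter]

theorem Fin.prod_filter_ne_zero_castSucc {M : Type*} [CommMonoid M] {n : ℕ}
    (h : Fin (n + 2) → M) :
    ∏ j ∈ univ.filter (· ≠ 0), h j =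
      (∏ i ∈ univ.filter (· ≠ 0), h (Fin.castSucc i : Fin (n + 2))) * h (Fin.last _) := by
  rw [prod_filter, prod_filter, Fin.prod_univ_castSucc, if_pos Fin.last_pos.ne']
  simp only [Fin.castSucc_ne_zero_iff]

namespace TreeQuery

variable {n : ℕ}

-- Only meaningful at `i ≠ 0`, where `parent i.castSucc < i.castSucc` is never `last`.
def initParent (parent : Fin (n + 2) → Fin (n + 2)) (i : Fin (n + 1)) : Fin (n + 1) :=
  Fin.lastCases 0 id (parent i.castSucc)

theorem castSucc_initParent {parent : Fin (n + 2) → Fin (n + 2)}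
    (hpar : ∀ j, j ≠ 0 → parent j < j) {i : Fin (n + 1)} (hi : i ≠ 0) :
    (initParent parent i).castSucc = parent i.castSucc := by
  obtain ⟨p, hp⟩ := Fin.exists_castSucc_eq.mpr <|
    Fin.ne_last_of_lt ((hpar _ (Fin.castSucc_ne_zero_iff.mpr hi)).trans (Fin.castSucc_lt_last i))
  rw [initParent, ← hp, Fin.lastCases_castSucc, id]

theorem initParent_lt {parent : Fin (n + 2) → Fin (n + 2)}
    (hpar : ∀ j, j ≠ 0 → parent j < j) (i : Fin (n + 1)) (hi : i ≠ 0) :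
    initParent parent i < i := by
  rw [← Fin.castSucc_lt_castSucc_iff, castSucc_initParent hpar hi]
  exact hpar _ (Fin.castSucc_ne_zero_iff.mpr hi)

variable {V C L : Type*} [Fintype V] [DecidableEq V] [DecidableEq C]
  (R : L → V → V → Prop) [∀ l, DecidableRel (R l)] (σ : V → C)

def lifts (parent : Fin (n + 1) → Fin (n + 1)) (lab : Fin (n + 1) → L) (g : Fin (n + 1) → C) :
    Finset (Fin (n + 1) → V) :=
  {f | (∀ j, j ≠ 0 → R (lab j) (f (parent j)) (f j)) ∧ ∀ j, σ (f j) = g j}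

variable {R σ} {τ : L → C → C → ℕ} (hτ : ∀ l v c, #{u | R l v u ∧ σ u = c} = τ l (σ v) c)
include hτ

theorem card_lifts_succ {parent : Fin (n + 2) → Fin (n + 2)} (hpar : ∀ j, j ≠ 0 → parent j < j)
    (lab : Fin (n + 2) → L) (g : Fin (n + 2) → C) :
    #(lifts R σ parent lab g) =
      #(lifts R σ (initParent parent) (Fin.init lab) (Fin.init g)) *
        τ (lab (Fin.last _)) (g (parent (Fin.last _))) (g (Fin.last _)) := by
  obtain ⟨p, hp⟩ := Fin.exists_castSucc_eq.mpr <| Fin.ne_last_of_lt <| hpar _ Fin.last_pos.ne'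
  have hsplit : lifts R σ parent lab g =
      ({f | Fin.init f ∈ lifts R σ (initParent parent) (Fin.init lab) (Fin.init g) ∧
        R (lab (Fin.last _)) (Fin.init f p) (f (Fin.last _)) ∧
          σ (f (Fin.last _)) = g (Fin.last _)} : Finset (Fin (n + 2) → V)) := by
    ext f
    have hedges : (∀ i : Fin (n + 1), i.castSucc ≠ 0 →
          R (lab i.castSucc) (f (parent i.castSucc)) (f i.castSucc)) ↔
        ∀ i, i ≠ 0 → R (Fin.init lab i) (Fin.init f (initParent parent i)) (Fin.init f i) :=
      forall_congr' fun i => imp_congr_ctx Fin.castSucc_ne_zero_iff fun hi => by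
        rw [← castSucc_initParent hpar hi]; rfl
    simp only [lifts, mem_filter, mem_univ, true_and, Fin.forall_fin_succ' (n := n + 1), hedges,
      ← hp, ne_eq, Fin.last_pos.ne', not_false_eq_true, forall_const]
    tauto
  rw [hsplit,
    Fin.card_filter_init_last _ fun f' v => R (lab (Fin.last _)) (f' p) v ∧ σ v = g (Fin.last _),
    sum_const_nat fun f hf => ?_]
  rw [hτ, ← hp, (mem_filter.mp hf).2.2 p]
  rfl

theorem card_lifts {parent : Fin (n + 1) → Fin (n + 1)} (hpar : ∀ j, j ≠ 0 → parent j < j)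
    (lab : Fin (n + 1) → L) (g : Fin (n + 1) → C) :
    #(lifts R σ parent lab g) =
      #{v | σ v = g 0} * ∏ j ∈ univ.filter (· ≠ 0), τ (lab j) (g (parent j)) (g j) := by
  induction n with
  | zero =>
    rw [filter_false_of_mem fun j _ => not_not.mpr (Fin.eq_zero j), prod_empty, mul_one]
    exact card_equiv (Equiv.funUnique (Fin 1) V) fun f => by simp [lifts, Fin.forall_fin_one]
  | succ n ih =>
    rw [card_lifts_succ hτ hpar, ih (initParent_lt hpar), Fin.prod_filter_ne_zero_castSucc,
      mul_assoc]
    congr 2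
    exact prod_congr rfl fun i hi => by rw [← castSucc_initParent hpar (mem_filter.mp hi).2]; rfl

end TreeQuery

/-- Exactness of the lifted estimator under a stable coloring for acyclic queries. -/
theorem stmt2 {V C : Type*} [Fintype V] [DecidableEq V] [Fintype C] [DecidableEq C]
    (E : Finset (V × V)) (σ : V → C) (n : ℕ)
    (parent : Fin (n + 1) → Fin (n + 1)) (dir : Fin (n + 1) → Bool)
    (hpar : ∀ j : Fin (n + 1), j ≠ 0 → parent j < j)
    (τout τin : C → C → ℕ)
    (hτout : ∀ (v : V) (c : C),
      (Finset.univ.filter (fun u => (v, u) ∈ E ∧ σ u = c)).card = τout (σ v) c)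
    (hτin : ∀ (v : V) (c : C),
      (Finset.univ.filter (fun u => (u, v) ∈ E ∧ σ u = c)).card = τin (σ v) c) :
    let EQ : Finset (Fin (n + 1) × Fin (n + 1)) :=
      (Finset.univ.filter (fun j : Fin (n + 1) => j ≠ 0)).image
        (fun j => if dir j then (parent j, j) else (j, parent j))
    let homQG : Finset (Fin (n + 1) → V) :=
      Finset.univ.filter (fun f => ∀ e ∈ EQ, (f e.1, f e.2) ∈ E)
    let homQF : Finset (Fin (n + 1) → C) :=
      Finset.univ.filter (fun g => ∀ e ∈ EQ, ∃ p ∈ E, σ p.1 = g e.1 ∧ σ p.2 = g e.2)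
    let ψ : C → ℕ := fun c => (Finset.univ.filter (fun v => σ v = c)).card
    let W : (Fin (n + 1) → C) → ℕ := fun g =>
      ψ (g 0) * ∏ j ∈ Finset.univ.filter (fun j : Fin (n + 1) => j ≠ 0),
        (if dir j then τout (g (parent j)) (g j) else τin (g (parent j)) (g j))
    (∀ g ∈ homQF, (homQG.filter (fun f => σ ∘ f = g)).card = W g) ∧
    (homQG.card = ∑ g ∈ homQF, W g) := by
  intro EQ homQG homQF ψ W
  let R : Bool → V → V → Prop := fun d v u => if d then (v, u) ∈ E else (u, v) ∈ E
  let τ : Bool → C → C → ℕ := fun d a b => if d then τout a b else τin a b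
  have hτ : ∀ d v c, #{u | R d v u ∧ σ u = c} = τ d (σ v) c := by
    rintro (_ | _) v c
    exacts [hτin v c, hτout v c]
  have hfiber : ∀ g, homQG.filter (fun f => σ ∘ f = g) = TreeQuery.lifts R σ parent dir g := by
    intro g
    ext f
    simp only [homQG, EQ, TreeQuery.lifts, mem_filter, mem_univ, true_and, forall_mem_image,
      funext_iff, Function.comp_apply]
    refine and_congr_left fun _ => forall_congr' fun j => imp_congr_right fun _ => ?_
    cases dir j <;> rfl
  have hcount : ∀ g, #(homQG.filter (fun f => σ ∘ f = g)) = W g := fun g => by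
    rw [hfiber]
    exact TreeQuery.card_lifts hτ hpar dir g
  refine ⟨fun g _ => hcount g, ?_⟩
  rw [card_eq_sum_card_fiberwise (f := (σ ∘ ·)) (t := homQF) fun f hf => ?_]
  · exact sum_congr rfl fun g _ => hcount g
  · simp only [homQG, homQF, coe_filter, mem_univ, true_and, Set.mem_ofPred_eq] at hf ⊢
    exact fun e he => ⟨(f e.1, f e.2), hf e he, rfl, rfl⟩
end

section
/- Let G be a finite directed graph, σ a coloring with colors C, and for colors c₁,c₂ let τ_max(c₁,c₂)/τ_min(c₁,c₂) ≤ ε for all pairs with E_{c₁c₂} ≠ ∅ (where τ_min > 0 on such pairs). Then for any acyclic query graph Q with n vertices, the lifted estimate Φ(Q,𝒢) computed with τ_avg satisfies max(Φ(Q,𝒢)/|hom(Q,G)|, |hom(Q,G)|/Φ(Q,𝒢)) ≤ ε^(n−1), assuming |hom(Q,G)| > 0. -/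
/-!
Every homomorphism `f : Q → G` has a colour pattern `σ ∘ f`, a homomorphism from `Q` into the
lifted graph `F = σ(G)`, so `|hom(Q,G)|` is a sum over `hom(Q,F)` of the number of
homomorphisms with a prescribed pattern `g`. For a tree query these are counted by attaching the
vertices one leaf at a time: a vertex of colour `g j` below an already placed vertex `v` has
`deg(v)` choices, which lies between `τ_min` and `τ_max`. Hence the count lies between
`ψ(g 0) ∏ τ_min` and `ψ(g 0) ∏ τ_max`. The lifted summand `ψ(g 0) ∏ τ_avg` lies in the same
interval, whose endpoints differ by a factor of at most `ε ^ n`; summing over `g` gives the bound.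
-/

open Finset

lemma prod_filter_ne_zero_eq_prod_succ {M : Type*} [CommMonoid M] {n : ℕ} (F : Fin (n + 1) → M) :
    ∏ j ∈ univ.filter (fun j : Fin (n + 1) => j ≠ 0), F j = ∏ i : Fin n, F i.succ := by
  rw [filter_ne', ← compl_singleton, ← Fin.image_succ_univ, prod_image (Fin.succ_injective _).injOn]

lemma le_pow_card_mul_of_prod_le {ι R : Type*} [Fintype ι] [CommSemiring R] [PartialOrder R]
    [IsOrderedRing R] {a x y ε : R} {lo hi : ι → R} (ha : 0 ≤ a) (hε : 0 ≤ ε) (hhi : ∀ i, 0 ≤ hi i)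
    (hratio : ∀ i, hi i ≤ ε * lo i) (hx : x ≤ a * ∏ i, hi i) (hy : a * ∏ i, lo i ≤ y) :
    x ≤ ε ^ Fintype.card ι * y := by
  have hprod : ∏ i, hi i ≤ ε ^ Fintype.card ι * ∏ i, lo i := by
    rw [← card_univ, ← prod_const, ← prod_mul_distrib]
    exact prod_le_prod (fun i _ => hhi i) fun i _ => hratio i
  calc x ≤ a * (ε ^ Fintype.card ι * ∏ i, lo i) := hx.trans (mul_le_mul_of_nonneg_left hprod ha)
    _ = ε ^ Fintype.card ι * (a * ∏ i, lo i) := mul_left_comm _ _ _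
    _ ≤ ε ^ Fintype.card ι * y := mul_le_mul_of_nonneg_left hy (pow_nonneg hε _)

-- The query edge between a parent `a` and its child `b`: directed away from the parent iff `d`.
def orient {α : Type*} (d : Bool) (a b : α) : α × α := if d then (a, b) else (b, a)

lemma map_orient {α β : Type*} (f : α → β) (d : Bool) (a b : α) :
    (f (orient d a b).1, f (orient d a b).2) = orient d (f a) (f b) := by
  cases d <;> rfl

section TreeMaps

variable {V : Type*} [Fintype V] {n : ℕ}

-- Vertex `j ≠ 0` of the tree hangs below `parent j`; `R j` relates the labels of `parent j` and `j`.
def treeMaps (parent : Fin (n + 1) → Fin (n + 1)) (P : Fin (n + 1) → V → Prop)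
    (R : Fin (n + 1) → V → V → Prop) [∀ j, DecidablePred (P j)]
    [∀ j v, DecidablePred (R j v)] : Finset (Fin (n + 1) → V) :=
  {f | (∀ j, P j (f j)) ∧ ∀ j, j ≠ 0 → R j (f (parent j)) (f j)}

def initParent (parent : Fin (n + 2) → Fin (n + 2)) : Fin (n + 1) → Fin (n + 1) :=
  fun j => Fin.ofNat (n + 1) (parent j.castSucc)

lemma castSucc_initParent {parent : Fin (n + 2) → Fin (n + 2)} {j : Fin (n + 1)}
    (h : parent j.castSucc < j.castSucc) :
    (initParent parent j).castSucc = parent j.castSucc := by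
  have : (parent j.castSucc : ℕ) < n + 1 := by
    have := j.isLt
    rw [Fin.lt_def, Fin.val_castSucc] at h
    omega
  ext
  simp [initParent, Nat.mod_eq_of_lt this]

lemma initParent_lt {parent : Fin (n + 2) → Fin (n + 2)} (hpar : ∀ j, j ≠ 0 → parent j < j)
    (j : Fin (n + 1)) (hj : j ≠ 0) : initParent parent j < j := by
  have h := hpar j.castSucc (Fin.castSucc_ne_zero_iff.mpr hj)
  rwa [← castSucc_initParent h, Fin.castSucc_lt_castSucc_iff] at h

lemma card_treeMaps_zero (parent : Fin 1 → Fin 1) (P : Fin 1 → V → Prop)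
    (R : Fin 1 → V → V → Prop) [∀ j, DecidablePred (P j)] [∀ j v, DecidablePred (R j v)] :
    #(treeMaps parent P R) = #{v | P 0 v} := by
  rw [← card_map (Equiv.funUnique (Fin 1) V).symm.toEmbedding]
  congr 1
  ext f
  simp [treeMaps, Fin.forall_fin_one]

section Succ

variable {parent : Fin (n + 2) → Fin (n + 2)} {P : Fin (n + 2) → V → Prop}
  {R : Fin (n + 2) → V → V → Prop} [∀ j, DecidablePred (P j)] [∀ j v, DecidablePred (R j v)]

lemma snoc_mem_treeMaps (hpar : ∀ j, j ≠ 0 → parent j < j) {p : Fin (n + 1)}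
    (hp : p.castSucc = parent (Fin.last _)) (f : Fin (n + 1) → V) (u : V) :
    (Fin.snoc f u : Fin (n + 2) → V) ∈ treeMaps parent P R ↔
      f ∈ treeMaps (initParent parent) (fun j => P j.castSucc) (fun j => R j.castSucc) ∧
        R (Fin.last _) (f p) u ∧ P (Fin.last _) u := by
  have hchild : (∀ i : Fin (n + 1), i ≠ 0 →
        R i.castSucc ((Fin.snoc f u : Fin (n + 2) → V) (parent i.castSucc)) (f i)) ↔
      ∀ i, i ≠ 0 → R i.castSucc (f (initParent parent i)) (f i) :=
    forall₂_congr fun i hi => by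
      rw [← castSucc_initParent (hpar _ (Fin.castSucc_ne_zero_iff.mpr hi)), Fin.snoc_castSucc]
  simp only [treeMaps, mem_filter, mem_univ, true_and, Fin.forall_fin_succ' (n := n + 1),
    Fin.snoc_castSucc, Fin.snoc_last, ← hp, Fin.castSucc_ne_zero_iff, ne_eq, Fin.last_eq_zero_iff]
  simp only [← ne_eq, hchild]
  tauto

lemma card_treeMaps_succ (hpar : ∀ j, j ≠ 0 → parent j < j) {p : Fin (n + 1)}
    (hp : p.castSucc = parent (Fin.last _)) :
    #(treeMaps parent P R) =
      ∑ f ∈ treeMaps (initParent parent) (fun j => P j.castSucc) (fun j => R j.castSucc),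
        #{u | R (Fin.last _) (f p) u ∧ P (Fin.last _) u} := by
  classical
  have hmem (f : Fin (n + 2) → V) : f ∈ treeMaps parent P R ↔
      Fin.init f ∈ treeMaps (initParent parent) (fun j => P j.castSucc) (fun j => R j.castSucc) ∧
        R (Fin.last _) (Fin.init f p) (f (Fin.last _)) ∧ P (Fin.last _) (f (Fin.last _)) := by
    simpa only [Fin.snoc_init_self] using snoc_mem_treeMaps hpar hp (Fin.init f) (f (Fin.last _))
  rw [card_eq_sum_card_fiberwise fun f hf => ((hmem f).mp hf).1]
  refine sum_congr rfl fun f hf => ?_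
  rw [← card_map ⟨_, Fin.snoc_right_injective (α := fun _ => V) f⟩]
  congr 1
  ext h
  simp only [mem_filter, mem_map, mem_univ, true_and, Function.Embedding.coeFn_mk]
  constructor
  · rintro ⟨hh, rfl⟩
    exact ⟨h (Fin.last _), ((hmem h).mp hh).2, Fin.snoc_init_self h⟩
  · rintro ⟨u, hu, rfl⟩
    exact ⟨(snoc_mem_treeMaps hpar hp f u).mpr ⟨hf, hu⟩, Fin.init_snoc _ _⟩

end Succ

theorem card_treeMaps_bounds (parent : Fin (n + 1) → Fin (n + 1))
    (hpar : ∀ j, j ≠ 0 → parent j < j) (P : Fin (n + 1) → V → Prop)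
    (R : Fin (n + 1) → V → V → Prop) [∀ j, DecidablePred (P j)] [∀ j v, DecidablePred (R j v)]
    (lo hi : Fin (n + 1) → ℕ) (h : ∀ j, j ≠ 0 → ∀ v, P (parent j) v →
      lo j ≤ #{u | R j v u ∧ P j u} ∧ #{u | R j v u ∧ P j u} ≤ hi j) :
    #{v | P 0 v} * ∏ i : Fin n, lo i.succ ≤ #(treeMaps parent P R) ∧
      #(treeMaps parent P R) ≤ #{v | P 0 v} * ∏ i : Fin n, hi i.succ := by
  induction n with
  | zero => simp [card_treeMaps_zero]
  | succ n ih =>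
    obtain ⟨p, hp⟩ := Fin.exists_castSucc_eq.mpr (hpar _ Fin.last_pos'.ne').ne
    set T := treeMaps (initParent parent) (fun j => P j.castSucc) (fun j => R j.castSucc)
    have hT := ih (initParent parent) (initParent_lt hpar) (fun j => P j.castSucc)
      (fun j => R j.castSucc) (fun j => lo j.castSucc) (fun j => hi j.castSucc) fun j hj v hv =>
        h _ (Fin.castSucc_ne_zero_iff.mpr hj) v
          (by rwa [← castSucc_initParent (hpar _ (Fin.castSucc_ne_zero_iff.mpr hj))])
    have hleaf (f) (hf : f ∈ T) := h _ Fin.last_pos'.ne' (f p) (hp ▸ (mem_filter.mp hf).2.1 p)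
    rw [card_treeMaps_succ hpar hp, Fin.prod_univ_castSucc, Fin.prod_univ_castSucc, ← mul_assoc,
      ← mul_assoc]
    simp only [Fin.succ_castSucc, Fin.succ_last]
    constructor
    · calc _ ≤ #T * lo (Fin.last _) := Nat.mul_le_mul_right _ hT.1
        _ ≤ _ := smul_eq_mul (#T) _ ▸ card_nsmul_le_sum _ _ _ fun f hf => (hleaf f hf).1
    · calc _ ≤ #T * hi (Fin.last _) :=
            smul_eq_mul (#T) _ ▸ sum_le_card_nsmul _ _ _ fun f hf => (hleaf f hf).2
        _ ≤ _ := Nat.mul_le_mul_right _ hT.2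

end TreeMaps

section Homomorphisms

variable {W V C : Type*} [Fintype W] [DecidableEq W] [Fintype V] [DecidableEq V]

def homs (EQ : Finset (W × W)) (E : Finset (V × V)) : Finset (W → V) :=
  {f | ∀ e ∈ EQ, (f e.1, f e.2) ∈ E}

theorem card_homs_eq_sum_card_fiber [Fintype C] [DecidableEq C] (EQ : Finset (W × W))
    (E : Finset (V × V)) (σ : V → C) :
    #(homs EQ E) = ∑ g ∈ homs EQ (E.image (Prod.map σ σ)), #{f ∈ homs EQ E | σ ∘ f = g} :=
  card_eq_sum_card_fiberwise fun f hf => by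
    simp only [homs, coe_filter, mem_univ, true_and, Set.mem_ofPred_eq] at hf ⊢
    exact fun e he => mem_image_of_mem (Prod.map σ σ) (hf e he)

end Homomorphisms

section ColorStatistics

variable {V C : Type*} [DecidableEq C] (E : Finset (V × V)) (σ : V → C)

def edgesBetween (d : Bool) (c c' : C) : Finset (V × V) :=
  {p ∈ E | σ p.1 = (orient d c c').1 ∧ σ p.2 = (orient d c c').2}

variable [Fintype V]

def colorClass (c : C) : Finset V := {v | σ v = c}

@[simp]
lemma mem_colorClass {c : C} {v : V} : v ∈ colorClass σ c ↔ σ v = c := by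
  simp [colorClass]

-- `degAvg`, `degMin`, `degMax` are the paper's `τ_avg`, `τ_min`, `τ_max` for the colour pair
-- `(c, c')`, with out-edges if `d` and in-edges otherwise.
def degAvg (d : Bool) (c c' : C) : ℚ := #(edgesBetween E σ d c c') / #(colorClass σ c)

lemma degAvg_nonneg (d : Bool) (c c' : C) : 0 ≤ degAvg E σ d c c' := by
  unfold degAvg
  positivity

variable [DecidableEq V]

def deg (d : Bool) (v : V) (c : C) : ℕ := #{u | orient d v u ∈ E ∧ σ u = c}

def degMin (d : Bool) (c c' : C) : ℕ :=
  if h : (colorClass σ c).Nonempty then (colorClass σ c).inf' h (deg E σ d · c') else 0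

def degMax (d : Bool) (c c' : C) : ℕ :=
  if h : (colorClass σ c).Nonempty then (colorClass σ c).sup' h (deg E σ d · c') else 0

lemma card_edgesBetween (d : Bool) (c c' : C) :
    #(edgesBetween E σ d c c') = ∑ v ∈ colorClass σ c, deg E σ d v c' := by
  have hmaps : Set.MapsTo (fun p : V × V => (orient d p.1 p.2).1) (edgesBetween E σ d c c')
      (colorClass σ c) := by
    intro p hp
    cases d <;> simp_all [edgesBetween, orient]
  rw [card_eq_sum_card_fiberwise hmaps]
  refine sum_congr rfl fun v hv => ?_
  rw [mem_colorClass] at hv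
  rw [deg, ← card_map ⟨orient d v, by cases d <;> simp [orient, Function.Injective]⟩]
  congr 1
  ext ⟨a, b⟩
  cases d <;> simp [edgesBetween, orient] <;> aesop

variable {E σ}

lemma degMin_le_deg {d : Bool} {c : C} {v : V} (hv : v ∈ colorClass σ c) (c' : C) :
    degMin E σ d c c' ≤ deg E σ d v c' := by
  rw [degMin, dif_pos ⟨v, hv⟩]
  exact inf'_le _ hv

lemma deg_le_degMax {d : Bool} {c : C} {v : V} (hv : v ∈ colorClass σ c) (c' : C) :
    deg E σ d v c' ≤ degMax E σ d c c' := by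
  rw [degMax, dif_pos ⟨v, hv⟩]
  exact le_sup' (deg E σ d · c') hv

lemma degMin_le_degAvg (d : Bool) (c c' : C) : (degMin E σ d c c' : ℚ) ≤ degAvg E σ d c c' := by
  rcases (colorClass σ c).eq_empty_or_nonempty with h | h
  · simp [degMin, degAvg, h]
  rw [degAvg, card_edgesBetween, le_div_iff₀ (by exact_mod_cast h.card_pos), mul_comm]
  have := card_nsmul_le_sum (colorClass σ c) (deg E σ d · c') _ fun v hv => degMin_le_deg hv c'
  rw [smul_eq_mul] at this
  exact_mod_cast this

lemma degAvg_le_degMax (d : Bool) (c c' : C) : degAvg E σ d c c' ≤ degMax E σ d c c' := by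
  rcases (colorClass σ c).eq_empty_or_nonempty with h | h
  · simp [degMax, degAvg, h]
  rw [degAvg, card_edgesBetween, div_le_iff₀ (by exact_mod_cast h.card_pos), mul_comm]
  have := sum_le_card_nsmul (colorClass σ c) (deg E σ d · c') _ fun v hv => deg_le_degMax hv c'
  rw [smul_eq_mul] at this
  exact_mod_cast this

end ColorStatistics

section TreeQueries

variable {V C : Type*} [DecidableEq C] {n : ℕ}

def treeEdges (parent : Fin (n + 1) → Fin (n + 1)) (dir : Fin (n + 1) → Bool) :
    Finset (Fin (n + 1) × Fin (n + 1)) :=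
  (univ.filter fun j : Fin (n + 1) => j ≠ 0).image fun j => orient (dir j) (parent j) j

lemma edgesBetween_nonempty [Fintype C] {E : Finset (V × V)} {σ : V → C}
    {parent : Fin (n + 1) → Fin (n + 1)} {dir : Fin (n + 1) → Bool} {g : Fin (n + 1) → C}
    (hg : g ∈ homs (treeEdges parent dir) (E.image (Prod.map σ σ))) {j : Fin (n + 1)}
    (hj : j ≠ 0) : (edgesBetween E σ (dir j) (g (parent j)) (g j)).Nonempty := by
  have := (mem_filter.mp hg).2 _ (mem_image_of_mem _ (mem_filter.mpr ⟨mem_univ j, hj⟩))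
  rw [map_orient, mem_image] at this
  obtain ⟨p, hp, h⟩ := this
  exact ⟨p, mem_filter.mpr ⟨hp, by rw [← h]; exact ⟨rfl, rfl⟩⟩⟩

variable [Fintype V] (E : Finset (V × V)) (σ : V → C) (parent : Fin (n + 1) → Fin (n + 1))
  (dir : Fin (n + 1) → Bool)

def liftedCount (g : Fin (n + 1) → C) : ℚ :=
  #(colorClass σ (g 0)) * ∏ i : Fin n, degAvg E σ (dir i.succ) (g (parent i.succ)) (g i.succ)

lemma liftedCount_nonneg (g : Fin (n + 1) → C) : 0 ≤ liftedCount E σ parent dir g :=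
  mul_nonneg (Nat.cast_nonneg _) (prod_nonneg fun _ _ => degAvg_nonneg _ _ _ _ _)

variable [DecidableEq V]

def coloredTreeHoms (g : Fin (n + 1) → C) : Finset (Fin (n + 1) → V) :=
  treeMaps parent (fun j v => σ v = g j) fun j v u => orient (dir j) v u ∈ E

lemma filter_homs_treeEdges_eq (g : Fin (n + 1) → C) :
    {f ∈ homs (treeEdges parent dir) E | σ ∘ f = g} = coloredTreeHoms E σ parent dir g := by
  ext f
  simp only [homs, treeEdges, coloredTreeHoms, treeMaps, mem_filter, mem_univ, true_and,
    forall_mem_image, map_orient, funext_iff, Function.comp_apply]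
  tauto

variable {E σ parent dir}

theorem card_coloredTreeHoms_approx (hpar : ∀ j, j ≠ 0 → parent j < j) {ε : ℚ} (hε : 0 ≤ ε)
    (g : Fin (n + 1) → C)
    (hratio : ∀ i : Fin n, (degMax E σ (dir i.succ) (g (parent i.succ)) (g i.succ) : ℚ) ≤
      ε * degMin E σ (dir i.succ) (g (parent i.succ)) (g i.succ)) :
    (#(coloredTreeHoms E σ parent dir g) : ℚ) ≤ ε ^ n * liftedCount E σ parent dir g ∧
      liftedCount E σ parent dir g ≤ ε ^ n * #(coloredTreeHoms E σ parent dir g) := by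
  obtain ⟨hmin, hmax⟩ := card_treeMaps_bounds parent hpar _
    (fun j v u => orient (dir j) v u ∈ E) _ _ fun j _ v hv =>
      have hv : v ∈ colorClass σ (g (parent j)) := (mem_colorClass σ).mpr hv
      ⟨degMin_le_deg hv (g j), deg_le_degMax hv (g j)⟩
  have hmin_le_lifted : (#(colorClass σ (g 0)) : ℚ) *
      ∏ i : Fin n, (degMin E σ (dir i.succ) (g (parent i.succ)) (g i.succ) : ℚ) ≤
        liftedCount E σ parent dir g :=
    mul_le_mul_of_nonneg_left (prod_le_prod (fun _ _ => Nat.cast_nonneg _)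
      fun _ _ => degMin_le_degAvg _ _ _) (Nat.cast_nonneg _)
  have hlifted_le_max : liftedCount E σ parent dir g ≤ (#(colorClass σ (g 0)) : ℚ) *
      ∏ i : Fin n, (degMax E σ (dir i.succ) (g (parent i.succ)) (g i.succ) : ℚ) :=
    mul_le_mul_of_nonneg_left (prod_le_prod (fun _ _ => degAvg_nonneg _ _ _ _ _)
      fun _ _ => degAvg_le_degMax _ _ _) (Nat.cast_nonneg _)
  constructor
  · simpa only [Fintype.card_fin] using le_pow_card_mul_of_prod_le (Nat.cast_nonneg _) hε
      (fun _ => Nat.cast_nonneg _) hratio (by exact_mod_cast hmax) hmin_le_lifted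
  · simpa only [Fintype.card_fin] using le_pow_card_mul_of_prod_le (Nat.cast_nonneg _) hε
      (fun _ => Nat.cast_nonneg _) hratio hlifted_le_max (by exact_mod_cast hmin)

end TreeQueries

/-- Error bound for the lifted estimator with average-degree statistics: if for every pair
of colors with at least one connecting edge (in either direction) the max degree statistic
is within a factor ε of the min degree statistic, then for an acyclic query with n+1
vertices the lifted estimate is within a factor ε^n of the true count. -/
theorem stmt3 {V C : Type*} [Fintype V] [DecidableEq V] [Fintype C] [DecidableEq C]
    (E : Finset (V × V)) (σ : V → C) (n : ℕ)
    (parent : Fin (n + 1) → Fin (n + 1)) (dir : Fin (n + 1) → Bool)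
    (hpar : ∀ j : Fin (n + 1), j ≠ 0 → parent j < j)
    (ε : ℚ) (hε1 : 1 ≤ ε) :
    let Vc : C → Finset V := fun c => Finset.univ.filter (fun v => σ v = c)
    let degOut : V → C → ℕ := fun v c =>
      (Finset.univ.filter (fun u => (v, u) ∈ E ∧ σ u = c)).card
    let degIn : V → C → ℕ := fun v c =>
      (Finset.univ.filter (fun u => (u, v) ∈ E ∧ σ u = c)).card
    let τminOut : C → C → ℕ := fun c₁ c₂ =>
      if h : (Vc c₁).Nonempty then (Vc c₁).inf' h (fun v => degOut v c₂) else 0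
    let τmaxOut : C → C → ℕ := fun c₁ c₂ =>
      if h : (Vc c₁).Nonempty then (Vc c₁).sup' h (fun v => degOut v c₂) else 0
    let τminIn : C → C → ℕ := fun c₁ c₂ =>
      if h : (Vc c₁).Nonempty then (Vc c₁).inf' h (fun v => degIn v c₂) else 0
    let τmaxIn : C → C → ℕ := fun c₁ c₂ =>
      if h : (Vc c₁).Nonempty then (Vc c₁).sup' h (fun v => degIn v c₂) else 0
    let τavgOut : C → C → ℚ := fun c₁ c₂ =>
      ((E.filter (fun p => σ p.1 = c₁ ∧ σ p.2 = c₂)).card : ℚ) / ((Vc c₁).card : ℚ)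
    let τavgIn : C → C → ℚ := fun c₁ c₂ =>
      ((E.filter (fun p => σ p.1 = c₂ ∧ σ p.2 = c₁)).card : ℚ) / ((Vc c₁).card : ℚ)
    let EQ : Finset (Fin (n + 1) × Fin (n + 1)) :=
      (Finset.univ.filter (fun j : Fin (n + 1) => j ≠ 0)).image
        (fun j => if dir j then (parent j, j) else (j, parent j))
    let homQG : Finset (Fin (n + 1) → V) :=
      Finset.univ.filter (fun f => ∀ e ∈ EQ, (f e.1, f e.2) ∈ E)
    let homQF : Finset (Fin (n + 1) → C) :=
      Finset.univ.filter (fun g => ∀ e ∈ EQ, ∃ p ∈ E, σ p.1 = g e.1 ∧ σ p.2 = g e.2)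
    let ψ : C → ℕ := fun c => (Vc c).card
    let Φ : ℚ := ∑ g ∈ homQF, (ψ (g 0) : ℚ) *
      ∏ j ∈ Finset.univ.filter (fun j : Fin (n + 1) => j ≠ 0),
        (if dir j then τavgOut (g (parent j)) (g j) else τavgIn (g (parent j)) (g j))
    (∀ c₁ c₂ : C, (E.filter (fun p => σ p.1 = c₁ ∧ σ p.2 = c₂)).Nonempty →
      0 < τminOut c₁ c₂ ∧ (τmaxOut c₁ c₂ : ℚ) ≤ ε * (τminOut c₁ c₂ : ℚ)) →
    (∀ c₁ c₂ : C, (E.filter (fun p => σ p.1 = c₂ ∧ σ p.2 = c₁)).Nonempty →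
      0 < τminIn c₁ c₂ ∧ (τmaxIn c₁ c₂ : ℚ) ≤ ε * (τminIn c₁ c₂ : ℚ)) →
    0 < homQG.card →
    max (Φ / (homQG.card : ℚ)) ((homQG.card : ℚ) / Φ) ≤ ε ^ n := by
  intro Vc degOut degIn τminOut τmaxOut τminIn τmaxIn τavgOut τavgIn EQ homQG homQF ψ Φ hOut hIn _
  have hε : 0 ≤ ε := zero_le_one.trans hε1
  have hratio : ∀ d c c', (edgesBetween E σ d c c').Nonempty →
      (degMax E σ d c c' : ℚ) ≤ ε * degMin E σ d c c' := by
    rintro (_ | _) c c' h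
    exacts [(hIn c c' h).2, (hOut c c' h).2]
  have hF : homQF = homs (treeEdges parent dir) (E.image (Prod.map σ σ)) :=
    filter_congr fun g _ => forall₂_congr fun e _ => by simp [Prod.ext_iff]
  have hcount : (#homQG : ℚ) = ∑ g ∈ homQF, (#(coloredTreeHoms E σ parent dir g) : ℚ) := by
    rw [hF]
    exact_mod_cast (card_homs_eq_sum_card_fiber (treeEdges parent dir) E σ).trans
      (sum_congr rfl fun g _ => by rw [filter_homs_treeEdges_eq])
  have hΦ : Φ = ∑ g ∈ homQF, liftedCount E σ parent dir g := by
    refine sum_congr rfl fun g _ => ?_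
    rw [prod_filter_ne_zero_eq_prod_succ]
    congr 1
    refine prod_congr rfl fun i _ => ?_
    cases dir i.succ <;> rfl
  have happrox : ∀ g ∈ homQF, _ := fun g hg => card_coloredTreeHoms_approx hpar hε g fun i =>
    hratio _ _ _ (edgesBetween_nonempty (hF ▸ hg) i.succ_ne_zero)
  have hΦ0 : 0 ≤ Φ := hΦ ▸ sum_nonneg fun g _ => liftedCount_nonneg E σ parent dir g
  refine max_le (div_le_of_le_mul₀ (by positivity) (by positivity) ?_)
    (div_le_of_le_mul₀ hΦ0 (by positivity) ?_)
  · rw [hΦ, hcount, mul_sum]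
    exact sum_le_sum fun g hg => (happrox g hg).2
  · rw [hΦ, hcount, mul_sum]
    exact sum_le_sum fun g hg => (happrox g hg).1
end

section
/- For any coloring σ of a finite directed graph G (not necessarily stable) and any acyclic query Q with tree ordering x₁,…,x_n, the lifted estimator using τ_max is an upper bound and the one using τ_min is a lower bound: Σ_{π∈hom(Q,F)} ψ(π(x₁)) ∏ τ_min(π(x_i),π(x_j)) ≤ |hom(Q,G)| ≤ Σ_{π∈hom(Q,F)} ψ(π(x₁)) ∏ τ_max(π(x_i),π(x_j)). -/
open Finset
set_option linter.unusedSectionVars false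
set_option maxHeartbeats 1000000

section
variable {V C : Type*} [Fintype V] [DecidableEq V] [Fintype C] [DecidableEq C]

def adjB (E : Finset (V × V)) (b : Bool) (v u : V) : Prop :=
  if b then (v, u) ∈ E else (u, v) ∈ E

instance (E : Finset (V × V)) (b : Bool) (v u : V) : Decidable (adjB E b v u) := by
  unfold adjB; infer_instance

def VcS (σ : V → C) (c : C) : Finset V := Finset.univ.filter (fun v => σ v = c)

def degB (E : Finset (V × V)) (σ : V → C) (b : Bool) (v : V) (c : C) : ℕ :=
  (Finset.univ.filter (fun u => adjB E b v u ∧ σ u = c)).card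

def tminB (E : Finset (V × V)) (σ : V → C) (b : Bool) (c₁ c₂ : C) : ℕ :=
  if h : (VcS σ c₁).Nonempty then (VcS σ c₁).inf' h (fun v => degB E σ b v c₂) else 0

def tmaxB (E : Finset (V × V)) (σ : V → C) (b : Bool) (c₁ c₂ : C) : ℕ :=
  if h : (VcS σ c₁).Nonempty then (VcS σ c₁).sup' h (fun v => degB E σ b v c₂) else 0

def homN (E : Finset (V × V)) (σ : V → C) (n : ℕ) (parent : Fin (n+1) → Fin (n+1))
    (dir : Fin (n+1) → Bool) (g : Fin (n+1) → C) : Finset (Fin (n+1) → V) :=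
  Finset.univ.filter (fun f => (∀ j, σ (f j) = g j) ∧
    ∀ j, j ≠ 0 → adjB E (dir j) (f (parent j)) (f j))

lemma mem_homN {E : Finset (V × V)} {σ : V → C} {n : ℕ} {parent : Fin (n+1) → Fin (n+1)}
    {dir : Fin (n+1) → Bool} {g : Fin (n+1) → C} {f : Fin (n+1) → V} :
    f ∈ homN E σ n parent dir g ↔ (∀ j, σ (f j) = g j) ∧
      ∀ j, j ≠ 0 → adjB E (dir j) (f (parent j)) (f j) := by
  simp [homN]

lemma tminB_le {E : Finset (V × V)} {σ : V → C} {b : Bool} {v : V} {c₂ : C} :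
    tminB E σ b (σ v) c₂ ≤ degB E σ b v c₂ := by
  have hv : v ∈ VcS σ (σ v) := by simp [VcS]
  rw [tminB, dif_pos ⟨v, hv⟩]
  exact Finset.inf'_le (fun v => degB E σ b v c₂) hv

lemma le_tmaxB {E : Finset (V × V)} {σ : V → C} {b : Bool} {v : V} {c₂ : C} :
    degB E σ b v c₂ ≤ tmaxB E σ b (σ v) c₂ := by
  have hv : v ∈ VcS σ (σ v) := by simp [VcS]
  rw [tmaxB, dif_pos ⟨v, hv⟩]
  exact Finset.le_sup' (fun v => degB E σ b v c₂) hv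

lemma prod_filter_ne_castSucc {M : Type*} [CommMonoid M] {n : ℕ} (F : Fin (n+2) → M) :
    ∏ j ∈ univ.filter (fun j : Fin (n+2) => j ≠ 0), F j =
    (∏ j ∈ univ.filter (fun j : Fin (n+1) => j ≠ 0), F j.castSucc) * F (Fin.last (n+1)) := by
  rw [prod_filter, prod_filter, Fin.prod_univ_castSucc]
  have h1 : (Fin.last (n+1) : Fin (n+2)) ≠ 0 := by simp [Fin.ext_iff]
  rw [if_pos h1]
  congr 1
  apply Finset.prod_congr rfl
  intro j _
  by_cases hj : j = 0 <;> simp [hj, Fin.castSucc_eq_zero_iff]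

theorem homN_bounds (E : Finset (V × V)) (σ : V → C) :
    ∀ (n : ℕ) (parent : Fin (n+1) → Fin (n+1)) (dir : Fin (n+1) → Bool),
    (∀ j : Fin (n+1), j ≠ 0 → parent j < j) → ∀ (g : Fin (n+1) → C),
    ((VcS σ (g 0)).card * ∏ j ∈ univ.filter (fun j : Fin (n+1) => j ≠ 0),
        tminB E σ (dir j) (g (parent j)) (g j) ≤ (homN E σ n parent dir g).card) ∧
    ((homN E σ n parent dir g).card ≤ (VcS σ (g 0)).card *
      ∏ j ∈ univ.filter (fun j : Fin (n+1) => j ≠ 0),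
        tmaxB E σ (dir j) (g (parent j)) (g j)) := by
  intro n
  induction n with
  | zero =>
    intro parent dir hpar g
    have hfe : univ.filter (fun j : Fin 1 => j ≠ 0) = ∅ := by
      ext j
      simp [Fin.fin_one_eq_zero j]
    rw [hfe]
    simp only [prod_empty, mul_one]
    have hcard : (homN E σ 0 parent dir g).card = (VcS σ (g 0)).card := by
      refine Finset.card_bij' (fun f _ => f 0) (fun v _ => fun _ => v) ?hi ?hj ?left ?right
      case hi =>
        intro f hf
        rw [mem_homN] at hf
        simp [VcS, hf.1 0]
      case hj =>
        intro v hv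
        rw [mem_homN]
        simp only [VcS, mem_filter] at hv
        refine ⟨fun j => ?_, fun j hj => absurd (Fin.fin_one_eq_zero j) hj⟩
        rw [Fin.fin_one_eq_zero j]
        exact hv.2
      case left =>
        intro f hf
        funext j
        rw [Fin.fin_one_eq_zero j]
      case right =>
        intro v hv
        rfl
    rw [hcard]
    exact ⟨le_rfl, le_rfl⟩
  | succ n ih =>
    intro parent dir hpar g
    have hL0 : (Fin.last (n+1) : Fin (n+2)) ≠ 0 := by simp [Fin.ext_iff]
    obtain ⟨pp, hppc⟩ : ∃ pp : Fin (n+1), Fin.castSucc pp = parent (Fin.last (n+1)) := by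
      have h := hpar _ hL0
      rw [Fin.lt_def, Fin.val_last] at h
      exact ⟨⟨(parent (Fin.last (n+1))).val, h⟩, by apply Fin.ext; simp⟩
    obtain ⟨P, hP, hPc⟩ : ∃ P : Fin (n+1) → Fin (n+1),
        (∀ j : Fin (n+1), j ≠ 0 → P j < j) ∧
        (∀ j : Fin (n+1), j ≠ 0 → Fin.castSucc (P j) = parent j.castSucc) := by
      refine ⟨fun j => ⟨min (parent j.castSucc).val n, Nat.lt_succ_of_le (Nat.min_le_right _ _)⟩,
        fun j hj => ?_, fun j hj => ?_⟩
      · have h := hpar j.castSucc (by simpa using hj)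
        rw [Fin.lt_def] at h
        simp only [Fin.coe_castSucc] at h
        have hjl := j.isLt
        rw [Fin.lt_def]
        show min (parent j.castSucc).val n < j.val
        omega
      · have h := hpar j.castSucc (by simpa using hj)
        rw [Fin.lt_def] at h
        simp only [Fin.coe_castSucc] at h
        have hjl := j.isLt
        apply Fin.ext
        show min (parent j.castSucc).val n = (parent j.castSucc).val
        omega
    have hmapinto : ∀ f ∈ homN E σ (n+1) parent dir g,
        (f ∘ Fin.castSucc) ∈ homN E σ n P (fun j => dir j.castSucc) (fun j => g j.castSucc) := by
      intro f hf
      rw [mem_homN] at hf ⊢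
      refine ⟨fun j => hf.1 _, fun j hj => ?_⟩
      have h2 := hf.2 j.castSucc (by simpa using hj)
      rw [← hPc j hj] at h2
      exact h2
    have hcard : (homN E σ (n+1) parent dir g).card =
        ∑ f' ∈ homN E σ n P (fun j => dir j.castSucc) (fun j => g j.castSucc),
          ((homN E σ (n+1) parent dir g).filter (fun f => f ∘ Fin.castSucc = f')).card :=
      Finset.card_eq_sum_card_fiberwise hmapinto
    have hfib : ∀ f' ∈ homN E σ n P (fun j => dir j.castSucc) (fun j => g j.castSucc),
        ((homN E σ (n+1) parent dir g).filter (fun f => f ∘ Fin.castSucc = f')).card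
          = degB E σ (dir (Fin.last (n+1))) (f' pp) (g (Fin.last (n+1))) := by
      intro f' hf'
      rw [mem_homN] at hf'
      rw [degB]
      refine Finset.card_bij' (fun f _ => f (Fin.last (n+1))) (fun u _ => Fin.snoc f' u)
        ?hi ?hj ?left ?right
      case hi =>
        intro f hf
        rw [mem_filter, mem_homN] at hf
        obtain ⟨⟨hcol, hadj⟩, hcmp⟩ := hf
        simp only [mem_filter, mem_univ, true_and]
        refine ⟨?_, hcol _⟩
        have h2 := hadj (Fin.last (n+1)) hL0
        rw [← hppc] at h2
        have h3 : f (Fin.castSucc pp) = f' pp := congrFun hcmp pp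
        rwa [h3] at h2
      case hj =>
        intro u hu
        simp only [mem_filter, mem_univ, true_and] at hu
        rw [mem_filter, mem_homN]
        refine ⟨⟨?_, ?_⟩, ?_⟩
        · intro j
          induction j using Fin.lastCases with
          | last => rw [Fin.snoc_last]; exact hu.2
          | cast k => rw [Fin.snoc_castSucc]; exact hf'.1 k
        · intro j hj
          induction j using Fin.lastCases with
          | last =>
            rw [Fin.snoc_last, ← hppc, Fin.snoc_castSucc]
            exact hu.1
          | cast k =>
            have hk : k ≠ 0 := by simpa using hj
            rw [Fin.snoc_castSucc, ← hPc k hk, Fin.snoc_castSucc]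
            exact hf'.2 k hk
        · funext k
          exact Fin.snoc_castSucc ..
      case left =>
        intro f hf
        rw [mem_filter] at hf
        funext j
        induction j using Fin.lastCases with
        | last => rw [Fin.snoc_last]
        | cast k =>
          rw [Fin.snoc_castSucc, ← hf.2]
          rfl
      case right =>
        intro u hu
        rw [Fin.snoc_last]
    obtain ⟨ihmin, ihmax⟩ := ih P (fun j => dir j.castSucc) hP (fun j => g j.castSucc)
    have h00 : g (Fin.castSucc (0 : Fin (n+1))) = g 0 := by rw [Fin.castSucc_zero]
    constructor
    · -- lower bound
      rw [prod_filter_ne_castSucc (fun j => tminB E σ (dir j) (g (parent j)) (g j))]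
      rw [hcard]
      calc (VcS σ (g 0)).card *
            ((∏ j ∈ univ.filter (fun j : Fin (n+1) => j ≠ 0),
              tminB E σ (dir j.castSucc) (g (parent j.castSucc)) (g j.castSucc)) *
             tminB E σ (dir (Fin.last (n+1))) (g (parent (Fin.last (n+1)))) (g (Fin.last (n+1))))
          = ((VcS σ (g (Fin.castSucc (0:Fin (n+1))))).card *
              ∏ j ∈ univ.filter (fun j : Fin (n+1) => j ≠ 0),
                tminB E σ (dir j.castSucc) (g (Fin.castSucc (P j))) (g j.castSucc)) *
             tminB E σ (dir (Fin.last (n+1))) (g (parent (Fin.last (n+1)))) (g (Fin.last (n+1))) := by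
            rw [h00, mul_assoc]
            congr 2
            apply Finset.prod_congr rfl
            intro j hj
            rw [hPc j (mem_filter.mp hj).2]
        _ ≤ (homN E σ n P (fun j => dir j.castSucc) (fun j => g j.castSucc)).card *
             tminB E σ (dir (Fin.last (n+1))) (g (parent (Fin.last (n+1)))) (g (Fin.last (n+1))) :=
            Nat.mul_le_mul_right _ ihmin
        _ = ∑ _f' ∈ homN E σ n P (fun j => dir j.castSucc) (fun j => g j.castSucc),
              tminB E σ (dir (Fin.last (n+1))) (g (parent (Fin.last (n+1)))) (g (Fin.last (n+1))) := by
            rw [Finset.sum_const, smul_eq_mul]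
        _ ≤ ∑ f' ∈ homN E σ n P (fun j => dir j.castSucc) (fun j => g j.castSucc),
              ((homN E σ (n+1) parent dir g).filter (fun f => f ∘ Fin.castSucc = f')).card := by
            apply Finset.sum_le_sum
            intro f' hf'
            rw [hfib f' hf']
            have hc : σ (f' pp) = g (parent (Fin.last (n+1))) := by
              rw [(mem_homN.mp hf').1 pp, ← hppc]
            rw [← hc]
            exact tminB_le
    · -- upper bound
      rw [prod_filter_ne_castSucc (fun j => tmaxB E σ (dir j) (g (parent j)) (g j))]
      rw [hcard]
      calc ∑ f' ∈ homN E σ n P (fun j => dir j.castSucc) (fun j => g j.castSucc),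
              ((homN E σ (n+1) parent dir g).filter (fun f => f ∘ Fin.castSucc = f')).card
          ≤ ∑ _f' ∈ homN E σ n P (fun j => dir j.castSucc) (fun j => g j.castSucc),
              tmaxB E σ (dir (Fin.last (n+1))) (g (parent (Fin.last (n+1)))) (g (Fin.last (n+1))) := by
            apply Finset.sum_le_sum
            intro f' hf'
            rw [hfib f' hf']
            have hc : σ (f' pp) = g (parent (Fin.last (n+1))) := by
              rw [(mem_homN.mp hf').1 pp, ← hppc]
            rw [← hc]
            exact le_tmaxB
        _ = (homN E σ n P (fun j => dir j.castSucc) (fun j => g j.castSucc)).card *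
             tmaxB E σ (dir (Fin.last (n+1))) (g (parent (Fin.last (n+1)))) (g (Fin.last (n+1))) := by
            rw [Finset.sum_const, smul_eq_mul]
        _ ≤ ((VcS σ (g (Fin.castSucc (0:Fin (n+1))))).card *
              ∏ j ∈ univ.filter (fun j : Fin (n+1) => j ≠ 0),
                tmaxB E σ (dir j.castSucc) (g (Fin.castSucc (P j))) (g j.castSucc)) *
             tmaxB E σ (dir (Fin.last (n+1))) (g (parent (Fin.last (n+1)))) (g (Fin.last (n+1))) :=
            Nat.mul_le_mul_right _ ihmax
        _ = (VcS σ (g 0)).card *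
            ((∏ j ∈ univ.filter (fun j : Fin (n+1) => j ≠ 0),
              tmaxB E σ (dir j.castSucc) (g (parent j.castSucc)) (g j.castSucc)) *
             tmaxB E σ (dir (Fin.last (n+1))) (g (parent (Fin.last (n+1)))) (g (Fin.last (n+1)))) := by
            rw [h00, mul_assoc]
            congr 2
            apply Finset.prod_congr rfl
            intro j hj
            rw [hPc j (mem_filter.mp hj).2]

theorem card_homQG (E : Finset (V × V)) (σ : V → C) (n : ℕ)
    (parent : Fin (n + 1) → Fin (n + 1)) (dir : Fin (n + 1) → Bool) :
    (univ.filter (fun f : Fin (n+1) → V => ∀ e ∈ (univ.filter (fun j : Fin (n+1) => j ≠ 0)).image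
        (fun j => if dir j then (parent j, j) else (j, parent j)), (f e.1, f e.2) ∈ E)).card
    = ∑ g ∈ univ.filter (fun g : Fin (n+1) → C =>
        ∀ e ∈ (univ.filter (fun j : Fin (n+1) => j ≠ 0)).image
          (fun j => if dir j then (parent j, j) else (j, parent j)),
          ∃ p ∈ E, σ p.1 = g e.1 ∧ σ p.2 = g e.2),
        (homN E σ n parent dir g).card := by
  have hpair : ∀ j : Fin (n+1), j ≠ 0 →
      (if dir j then (parent j, j) else (j, parent j)) ∈
        (univ.filter (fun j : Fin (n+1) => j ≠ 0)).image
          (fun j => if dir j then (parent j, j) else (j, parent j)) :=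
    fun j hj => mem_image_of_mem _ (mem_filter.mpr ⟨mem_univ _, hj⟩)
  have hfiber : ∀ g : Fin (n+1) → C,
      ((univ.filter (fun f : Fin (n+1) → V =>
          ∀ e ∈ (univ.filter (fun j : Fin (n+1) => j ≠ 0)).image
            (fun j => if dir j then (parent j, j) else (j, parent j)),
            (f e.1, f e.2) ∈ E)).filter (fun f => σ ∘ f = g))
        = homN E σ n parent dir g := by
    intro g
    ext f
    rw [mem_filter, mem_filter, mem_homN]
    constructor
    · rintro ⟨⟨-, hQ⟩, hcolf⟩
      have hcol : ∀ j, σ (f j) = g j := fun j => congrFun hcolf j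
      refine ⟨hcol, fun j hj => ?_⟩
      have h2 := hQ _ (hpair j hj)
      cases hdj : dir j
      · rw [hdj] at h2
        simp only [Bool.false_eq_true, if_false] at h2
        simp only [adjB, hdj, Bool.false_eq_true, if_false]
        exact h2
      · rw [hdj] at h2
        simp only [if_true] at h2
        simp only [adjB, hdj, if_true]
        exact h2
    · rintro ⟨hcol, hadj⟩
      refine ⟨⟨mem_univ _, fun e he => ?_⟩, funext hcol⟩
      obtain ⟨j, hj, hje⟩ := mem_image.mp he
      have hj0 : j ≠ 0 := (mem_filter.mp hj).2
      have ha := hadj j hj0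
      subst hje
      cases hdj : dir j
      · rw [adjB, hdj] at ha
        simp only [Bool.false_eq_true, if_false] at ha
        simp only [Bool.false_eq_true, if_false]
        exact ha
      · rw [adjB, hdj] at ha
        simp only [if_true] at ha
        simp only [if_true]
        exact ha
  have hzero : ∀ g ∈ (univ : Finset (Fin (n+1) → C)),
      g ∉ univ.filter (fun g : Fin (n+1) → C =>
        ∀ e ∈ (univ.filter (fun j : Fin (n+1) => j ≠ 0)).image
          (fun j => if dir j then (parent j, j) else (j, parent j)),
          ∃ p ∈ E, σ p.1 = g e.1 ∧ σ p.2 = g e.2) →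
      (homN E σ n parent dir g).card = 0 := by
    intro g _ hg
    rw [Finset.card_eq_zero, Finset.eq_empty_iff_forall_notMem]
    intro f hf
    obtain ⟨hcol, hadj⟩ := mem_homN.mp hf
    apply hg
    rw [mem_filter]
    refine ⟨mem_univ _, fun e he => ?_⟩
    obtain ⟨j, hj, hje⟩ := mem_image.mp he
    have hj0 : j ≠ 0 := (mem_filter.mp hj).2
    have ha := hadj j hj0
    subst hje
    cases hdj : dir j
    · rw [adjB, hdj] at ha
      simp only [Bool.false_eq_true, if_false] at ha
      simp only [Bool.false_eq_true, if_false]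
      exact ⟨(f j, f (parent j)), ha, hcol j, hcol (parent j)⟩
    · rw [adjB, hdj] at ha
      simp only [if_true] at ha
      simp only [if_true]
      exact ⟨(f (parent j), f j), ha, hcol (parent j), hcol j⟩
  calc (univ.filter (fun f : Fin (n+1) → V =>
          ∀ e ∈ (univ.filter (fun j : Fin (n+1) => j ≠ 0)).image
            (fun j => if dir j then (parent j, j) else (j, parent j)),
            (f e.1, f e.2) ∈ E)).card
      = ∑ g ∈ (univ : Finset (Fin (n+1) → C)),
          ((univ.filter (fun f : Fin (n+1) → V =>
            ∀ e ∈ (univ.filter (fun j : Fin (n+1) => j ≠ 0)).image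
              (fun j => if dir j then (parent j, j) else (j, parent j)),
              (f e.1, f e.2) ∈ E)).filter (fun f => σ ∘ f = g)).card :=
        Finset.card_eq_sum_card_fiberwise (fun f _ => mem_univ _)
    _ = ∑ g ∈ (univ : Finset (Fin (n+1) → C)), (homN E σ n parent dir g).card := by
        apply Finset.sum_congr rfl
        intro g _
        rw [hfiber g]
    _ = ∑ g ∈ univ.filter (fun g : Fin (n+1) → C =>
          ∀ e ∈ (univ.filter (fun j : Fin (n+1) => j ≠ 0)).image
            (fun j => if dir j then (parent j, j) else (j, parent j)),
            ∃ p ∈ E, σ p.1 = g e.1 ∧ σ p.2 = g e.2),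
          (homN E σ n parent dir g).card :=
        (Finset.sum_subset (Finset.subset_univ _) hzero).symm

end

/-- For any coloring (not necessarily stable) and an acyclic query with tree ordering,
the lifted estimator with min-degree statistics is a lower bound on |hom(Q,G)| and the
one with max-degree statistics is an upper bound. -/
theorem stmt10 {V C : Type*} [Fintype V] [DecidableEq V] [Fintype C] [DecidableEq C]
    (E : Finset (V × V)) (σ : V → C) (n : ℕ)
    (parent : Fin (n + 1) → Fin (n + 1)) (dir : Fin (n + 1) → Bool)
    (hpar : ∀ j : Fin (n + 1), j ≠ 0 → parent j < j) :
    let Vc : C → Finset V := fun c => Finset.univ.filter (fun v => σ v = c)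
    let degOut : V → C → ℕ := fun v c =>
      (Finset.univ.filter (fun u => (v, u) ∈ E ∧ σ u = c)).card
    let degIn : V → C → ℕ := fun v c =>
      (Finset.univ.filter (fun u => (u, v) ∈ E ∧ σ u = c)).card
    let τminOut : C → C → ℕ := fun c₁ c₂ =>
      if h : (Vc c₁).Nonempty then (Vc c₁).inf' h (fun v => degOut v c₂) else 0
    let τmaxOut : C → C → ℕ := fun c₁ c₂ =>
      if h : (Vc c₁).Nonempty then (Vc c₁).sup' h (fun v => degOut v c₂) else 0
    let τminIn : C → C → ℕ := fun c₁ c₂ =>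
      if h : (Vc c₁).Nonempty then (Vc c₁).inf' h (fun v => degIn v c₂) else 0
    let τmaxIn : C → C → ℕ := fun c₁ c₂ =>
      if h : (Vc c₁).Nonempty then (Vc c₁).sup' h (fun v => degIn v c₂) else 0
    let EQ : Finset (Fin (n + 1) × Fin (n + 1)) :=
      (Finset.univ.filter (fun j : Fin (n + 1) => j ≠ 0)).image
        (fun j => if dir j then (parent j, j) else (j, parent j))
    let homQG : Finset (Fin (n + 1) → V) :=
      Finset.univ.filter (fun f => ∀ e ∈ EQ, (f e.1, f e.2) ∈ E)
    let homQF : Finset (Fin (n + 1) → C) :=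
      Finset.univ.filter (fun g => ∀ e ∈ EQ, ∃ p ∈ E, σ p.1 = g e.1 ∧ σ p.2 = g e.2)
    let ψ : C → ℕ := fun c => (Vc c).card
    (∑ g ∈ homQF, ψ (g 0) *
        ∏ j ∈ Finset.univ.filter (fun j : Fin (n + 1) => j ≠ 0),
          (if dir j then τminOut (g (parent j)) (g j) else τminIn (g (parent j)) (g j))
      ≤ homQG.card) ∧
    (homQG.card ≤ ∑ g ∈ homQF, ψ (g 0) *
        ∏ j ∈ Finset.univ.filter (fun j : Fin (n + 1) => j ≠ 0),
          (if dir j then τmaxOut (g (parent j)) (g j) else τmaxIn (g (parent j)) (g j))) := by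
  refine ⟨?_, ?_⟩
  · rw [card_homQG E σ n parent dir]
    apply Finset.sum_le_sum
    intro g hg
    refine le_trans (le_of_eq ?_) (homN_bounds E σ n parent dir hpar g).1
    congr 1
    apply Finset.prod_congr rfl
    intro j hj
    cases hdj : dir j
    · simp only [hdj, Bool.false_eq_true, if_false, tminB, VcS, degB, adjB]
    · simp only [hdj, if_true, tminB, VcS, degB, adjB]
  · rw [card_homQG E σ n parent dir]
    apply Finset.sum_le_sum
    intro g hg
    refine le_trans (homN_bounds E σ n parent dir hpar g).2 (le_of_eq ?_)
    congr 1
    apply Finset.prod_congr rfl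
    intro j hj
    cases hdj : dir j
    · simp only [hdj, Bool.false_eq_true, if_false, tmaxB, VcS, degB, adjB]
    · simp only [hdj, if_true, tmaxB, VcS, degB, adjB]
end
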